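/- arXiv:1209.5224 — 7 statements merged into one kernel-verified Lean document; each statement's English description precedes it below -/
import Mathlib

section
/- The map η : D → M D preserves directed suprema: if 𝒟 ⊆ D is directed with supremum d₀, then η(d₀) is the least monotonic predicate m with m ≥ η(d) for all d ∈ 𝒟, i.e., η(d₀) = sup_{d∈𝒟} η(d) in M D. -/
open Classical

variable {D D' L : Type*}

/-- `a` is way below `b`. -/
def WayBelow [Preorder D] (a b : D) : Prop :=
  ∀ S : Set D, S.Nonempty → DirectedOn (· ≤ ·) S → ∀ s : D, IsLUB S s → b ≤ s → ∃ c ∈ S, a ≤ c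

/-- Directed-complete poset. -/
def IsDCPO (D : Type*) [Preorder D] : Prop :=
  ∀ S : Set D, S.Nonempty → DirectedOn (· ≤ ·) S → ∃ s : D, IsLUB S s

/-- A domain: a continuous directed-complete poset. -/
def IsFuzzyDomain (D : Type*) [Preorder D] : Prop :=
  IsDCPO D ∧ ∀ b : D, DirectedOn (· ≤ ·) {a | WayBelow a b} ∧ IsLUB {a | WayBelow a b} b

/-- An `L`-fuzzy monotonic predicate on `D`: an antitone map sending directed
suprema in `D` to infima in `L` (i.e. a Scott-continuous map `D → Lᵒᵖ`). -/
def IsMonPred [Preorder D] [CompleteLattice L] (m : D → L) : Prop :=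
  Antitone m ∧ ∀ S : Set D, S.Nonempty → DirectedOn (· ≤ ·) S →
    ∀ s : D, IsLUB S s → m s = ⨅ c ∈ S, m c

/-- `η d₀` sends `d` to `1` if `d ≤ d₀` and to `0` otherwise. -/
noncomputable def eta [Preorder D] (L : Type*) [CompleteLattice L] (d₀ : D) : D → L :=
  fun d => if d ≤ d₀ then ⊤ else ⊥

/-- `f^u b = ⨅ { f a ∣ a ≪ b }`, the monotonic-predicate hull. -/
noncomputable def uHull [Preorder D] [CompleteLattice L] (f : D → L) : D → L :=
  fun b => ⨅ a ∈ {a | WayBelow a b}, f a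

theorem stmt_3 [PartialOrder D] [CompletelyDistribLattice L]
    (hD : IsFuzzyDomain D) (S : Set D) (hne : S.Nonempty) (hdir : DirectedOn (· ≤ ·) S)
    (d₀ : D) (hlub : IsLUB S d₀) :
    (∀ d ∈ S, eta L d ≤ eta L d₀) ∧
      ∀ m : D → L, IsMonPred m → (∀ d ∈ S, eta L d ≤ m) → eta L d₀ ≤ m := by
  constructor
  · intro d hd x
    unfold eta
    by_cases hx : x ≤ d
    · simp [hx, hx.trans (hlub.1 hd)]
    · simp [hx]
  · intro m hm hge x
    unfold eta
    by_cases hx : x ≤ d₀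
    · simp only [hx, if_true]
      have hS : ∀ c ∈ S, m c = ⊤ := by
        intro c hc
        have := hge c hc c
        simpa [eta] using this
      have hmd₀ : m d₀ = ⊤ := by
        rw [hm.2 S hne hdir d₀ hlub]
        simp only [iInf_eq_top]
        exact fun c hc => hS c hc
      calc ⊤ = m d₀ := hmd₀.symm
        _ ≤ m x := hm.1 hx
    · simp [hx]
end

section
/- For an antitone function f : D → L, the function f^u defined by f^u(b) = inf { f(a) ∣ a ∈ D, a ≪ b } (infimum over all a way below b) is the least L-fuzzy monotonic predicate f' on D satisfying f ≤ f' pointwise. -/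
open Classical

variable {D D' L : Type*}

section Aux

variable [PartialOrder D]

lemma wayBelow_le {a b : D} (h : WayBelow a b) : a ≤ b := by
  obtain ⟨c, hc, hac⟩ := h {b} ⟨b, rfl⟩
    (fun x hx y hy => ⟨b, rfl, by simp_all, by simp_all⟩) b isLUB_singleton le_rfl
  rcases hc with rfl
  exact hac

lemma le_trans_wayBelow {a x b : D} (hax : a ≤ x) (h : WayBelow x b) : WayBelow a b :=
  fun S hS hDir s hs hbs =>
    let ⟨c, hc, hxc⟩ := h S hS hDir s hs hbs
    ⟨c, hc, hax.trans hxc⟩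

lemma wayBelow_le_trans {a b c : D} (h : WayBelow a b) (hbc : b ≤ c) : WayBelow a c :=
  fun S hS hDir s hs hcs => h S hS hDir s hs (hbc.trans hcs)

lemma wbset_nonempty (hD : IsFuzzyDomain D) (b : D) : {a | WayBelow a b}.Nonempty := by
  by_contra h
  rw [Set.not_nonempty_iff_eq_empty] at h
  have hlub := (hD.2 b).2
  rw [h] at hlub
  have hleast : ∀ d : D, b ≤ d := fun d => hlub.2 (by simp [upperBounds])
  have : b ∈ ({a | WayBelow a b} : Set D) := by
    intro S hS _ _ _ _
    obtain ⟨c, hc⟩ := hS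
    exact ⟨c, hc, hleast c⟩
  rw [h] at this
  exact this

lemma wayBelow_interp (hD : IsFuzzyDomain D) {a s : D} (h : WayBelow a s) :
    ∃ y, WayBelow a y ∧ WayBelow y s := by
  set A := {x : D | ∃ y, WayBelow x y ∧ WayBelow y s} with hA
  have hAne : A.Nonempty := by
    obtain ⟨x, hx⟩ := wbset_nonempty hD a
    exact ⟨x, a, hx, h⟩
  have hAdir : DirectedOn (· ≤ ·) A := by
    rintro x1 ⟨y1, hx1, hy1⟩ x2 ⟨y2, hx2, hy2⟩
    obtain ⟨y3, hy3, h13, h23⟩ := (hD.2 s).1 y1 hy1 y2 hy2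
    obtain ⟨x3, hx3, hx13, hx23⟩ :=
      (hD.2 y3).1 x1 (wayBelow_le_trans hx1 h13) x2 (wayBelow_le_trans hx2 h23)
    exact ⟨x3, ⟨y3, hx3, hy3⟩, hx13, hx23⟩
  have hAlub : IsLUB A s := by
    constructor
    · rintro x ⟨y, hxy, hys⟩
      exact (wayBelow_le hxy).trans (wayBelow_le hys)
    · intro u hu
      refine (hD.2 s).2.2 ?_
      intro y hy
      exact (hD.2 y).2.2 fun x hx => hu ⟨y, hx, hy⟩
  obtain ⟨x, hxA, hax⟩ := h A hAne hAdir s hAlub le_rfl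
  obtain ⟨y, hxy, hys⟩ := hxA
  exact ⟨y, le_trans_wayBelow hax hxy, hys⟩

end Aux

theorem stmt_5 [PartialOrder D] [CompletelyDistribLattice L]
    (hD : IsFuzzyDomain D) (f : D → L) (hf : Antitone f) :
    IsMonPred (uHull f) ∧ f ≤ uHull f ∧
      ∀ f' : D → L, IsMonPred f' → f ≤ f' → uHull f ≤ f' := by
  have hanti : Antitone (uHull (L := L) f) := by
    intro b b' hbb'
    exact le_iInf₂ fun a ha => iInf_le_of_le a (iInf_le _ (wayBelow_le_trans ha hbb'))
  refine ⟨⟨hanti, ?_⟩, ?_, ?_⟩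
  · intro S hSne hSdir s hlub
    apply le_antisymm
    · exact le_iInf₂ fun c hc => hanti (hlub.1 hc)
    · refine le_iInf₂ fun a ha => ?_
      obtain ⟨y, hay, hys⟩ := wayBelow_interp hD ha
      obtain ⟨c, hcS, hyc⟩ := hys S hSne hSdir s hlub le_rfl
      calc ⨅ c ∈ S, uHull f c ≤ uHull f c := iInf_le_of_le c (iInf_le _ hcS)
        _ ≤ f a := iInf_le_of_le a (iInf_le _ (wayBelow_le_trans hay hyc))
  · intro b
    exact le_iInf₂ fun a ha => hf (wayBelow_le ha)
  · rintro f' ⟨hf'anti, hf'inf⟩ hff' b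
    have heq := hf'inf {a | WayBelow a b} (wbset_nonempty hD b) (hD.2 b).1 b (hD.2 b).2
    rw [heq]
    exact le_iInf₂ fun a ha => le_trans (iInf_le_of_le a (iInf_le _ ha)) (hff' a)
end

section
/- For a family ℱ of L-fuzzy monotonic predicates on a domain D, the infimum of ℱ in the complete lattice M D is the pointwise infimum, and the supremum of ℱ equals (pointwise sup of ℱ)^u, where g^u(b) = inf { g(a) ∣ a ≪ b }. For finite ℱ the supremum is the pointwise supremum. -/
open Classical

variable {D D' L : Type*}

/-- Way-below implies ≤. -/
lemma WayBelow.le' [Preorder D] {a b : D} (h : WayBelow a b) : a ≤ b := by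
  obtain ⟨c, hc, hac⟩ := h {b} ⟨b, rfl⟩
    (fun x hx y hy => ⟨b, rfl, by simp_all, by simp_all⟩) b isLUB_singleton le_rfl
  rw [Set.mem_singleton_iff] at hc
  exact hc ▸ hac

/-- Way-below is monotone on both sides. -/
lemma WayBelow.mono' [Preorder D] {a' a b b' : D} (h : WayBelow a b)
    (ha : a' ≤ a) (hb : b ≤ b') : WayBelow a' b' := by
  intro S hne hdir s hlub hbs
  obtain ⟨c, hc, hac⟩ := h S hne hdir s hlub (hb.trans hbs)
  exact ⟨c, hc, ha.trans hac⟩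

/-- In a domain, the set of elements way below `b` is nonempty. -/
lemma wayBelow_nonempty [Preorder D] (hD : IsFuzzyDomain D) (b : D) :
    {a | WayBelow a b}.Nonempty := by
  by_contra h
  rw [Set.not_nonempty_iff_eq_empty] at h
  have hlub := (hD.2 b).2
  rw [h] at hlub
  have hb : ∀ x, b ≤ x := fun x => hlub.2 (fun y hy => hy.elim)
  have hbb : WayBelow b b := by
    intro S hne hdir s hlubS hbs
    exact ⟨hne.choose, hne.choose_spec, hb _⟩
  have : b ∈ ({a | WayBelow a b} : Set D) := hbb
  rw [h] at this
  exact this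

/-- For a directed set `S` with lub `s`, the set of elements way below some member of `S`
is directed with lub `s`. -/
lemma wayBelow_union [Preorder D] (hD : IsFuzzyDomain D) {S : Set D}
    (hne : S.Nonempty) (hdir : DirectedOn (· ≤ ·) S) {s : D} (hlub : IsLUB S s) :
    ({a | ∃ c ∈ S, WayBelow a c}).Nonempty ∧
    DirectedOn (· ≤ ·) {a | ∃ c ∈ S, WayBelow a c} ∧
    IsLUB {a | ∃ c ∈ S, WayBelow a c} s := by
  obtain ⟨c₀, hc₀⟩ := hne
  obtain ⟨a₀, ha₀⟩ := wayBelow_nonempty hD c₀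
  refine ⟨⟨a₀, c₀, hc₀, ha₀⟩, ?_, ?_, ?_⟩
  · rintro x ⟨c₁, hc₁, hx⟩ y ⟨c₂, hc₂, hy⟩
    obtain ⟨c, hc, h1, h2⟩ := hdir c₁ hc₁ c₂ hc₂
    obtain ⟨z, hz, hxz, hyz⟩ := (hD.2 c).1 x (hx.mono' le_rfl h1) y (hy.mono' le_rfl h2)
    exact ⟨z, ⟨c, hc, hz⟩, hxz, hyz⟩
  · rintro x ⟨c, hc, hx⟩
    exact hx.le'.trans (hlub.1 hc)
  · intro u hu
    refine hlub.2 ?_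
    intro c hc
    refine (hD.2 c).2.2 ?_
    intro a ha
    exact hu ⟨c, hc, ha⟩

/-- A finite subset of a nonempty directed set has an upper bound in the set. -/
lemma directedOn_finite_bound [Preorder D] {S T : Set D} (hne : S.Nonempty)
    (hdir : DirectedOn (· ≤ ·) S) (hT : T.Finite) (hTS : T ⊆ S) :
    ∃ u ∈ S, ∀ t ∈ T, t ≤ u := by
  revert hTS
  refine Set.Finite.induction_on (motive := fun T _ => T ⊆ S → ∃ u ∈ S, ∀ t ∈ T, t ≤ u) T hT
    (fun _ => ⟨hne.choose, hne.choose_spec, fun t ht => ht.elim⟩) ?_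
  intro a T ha hTfin ih hTS
  obtain ⟨u, hu, hub⟩ := ih (fun t ht => hTS (Set.mem_insert_of_mem a ht))
  obtain ⟨v, hv, hav, huv⟩ := hdir a (hTS (Set.mem_insert a T)) u hu
  refine ⟨v, hv, ?_⟩
  rintro t (rfl | ht)
  · exact hav
  · exact (hub t ht).trans huv

lemma exists_cofinal_fiber [Preorder D] [CompleteLattice L] {S : Set D}
    (hne : S.Nonempty) (hdir : DirectedOn (· ≤ ·) S) {F : Set (D → L)}
    (hfin : F.Finite) (g : S → F) :
    ∃ f : F, ∀ c : S, ∃ c' : S, (c : D) ≤ (c' : D) ∧ g c' = f := by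
  by_contra h
  push_neg at h
  choose c hc using h
  have hfinT : (Set.range fun f : F => ((c f : D))).Finite := by
    have : (Set.range c).Finite := by
      have : Finite F := hfin
      exact Set.finite_range c
    exact this.image Subtype.val |>.subset (by
      rintro x ⟨f, rfl⟩; exact ⟨c f, ⟨f, rfl⟩, rfl⟩)
  obtain ⟨u, hu, hub⟩ := directedOn_finite_bound hne hdir hfinT
    (by rintro x ⟨f, rfl⟩; exact (c f).2)
  exact hc (g ⟨u, hu⟩) ⟨u, hu⟩ (hub _ ⟨g ⟨u, hu⟩, rfl⟩) rfl

theorem stmt_6 [PartialOrder D] [CompletelyDistribLattice L]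
    (hD : IsFuzzyDomain D) (F : Set (D → L)) (hF : ∀ f ∈ F, IsMonPred f) :
    IsMonPred (fun b => ⨅ f ∈ F, f b) ∧
    (∀ f ∈ F, (fun b => ⨅ g ∈ F, g b) ≤ f) ∧
    (∀ m : D → L, IsMonPred m → (∀ f ∈ F, m ≤ f) → m ≤ fun b => ⨅ g ∈ F, g b) ∧
    IsMonPred (uHull (fun b => ⨆ f ∈ F, f b)) ∧
    (∀ f ∈ F, f ≤ uHull (fun b => ⨆ g ∈ F, g b)) ∧
    (∀ m : D → L, IsMonPred m → (∀ f ∈ F, f ≤ m) →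
      uHull (fun b => ⨆ g ∈ F, g b) ≤ m) ∧
    (F.Finite → IsMonPred (fun b => ⨆ f ∈ F, f b)) := by
  set g : D → L := fun b => ⨆ f ∈ F, f b with hg
  have hganti : Antitone g := fun x y hxy => iSup₂_mono fun f hf => (hF f hf).1 hxy
  have huanti : Antitone (uHull g) := by
    intro x y hxy
    simp only [uHull]
    exact biInf_mono fun a (ha : WayBelow a x) => ha.mono' le_rfl hxy
  refine ⟨⟨?_, ?_⟩, ?_, ?_, ⟨huanti, ?_⟩, ?_, ?_, ?_⟩
  · -- antitone of pointwise inf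
    exact fun x y hxy => iInf₂_mono fun f hf => (hF f hf).1 hxy
  · -- continuity of pointwise inf
    intro S hne hdir s hlub
    simp only
    have : ∀ f ∈ F, f s = ⨅ c ∈ S, f c := fun f hf => (hF f hf).2 S hne hdir s hlub
    calc ⨅ f ∈ F, f s = ⨅ f ∈ F, ⨅ c ∈ S, f c := by
          exact iInf_congr fun f => iInf_congr fun hf => this f hf
      _ = ⨅ c ∈ S, ⨅ f ∈ F, f c := by
          rw [iInf₂_comm]
  · -- lower bound
    intro f hf b
    exact iInf₂_le f hf
  · -- greatest lower bound
    intro m hm hmf b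
    exact le_iInf₂ fun f hf => hmf f hf b
  · -- continuity of uHull g
    intro S hne hdir s hlub
    apply le_antisymm
    · exact le_iInf₂ fun c hc => huanti (hlub.1 hc)
    · refine le_iInf₂ ?_
      intro a (ha : WayBelow a s)
      obtain ⟨hTne, hTdir, hTlub⟩ := wayBelow_union hD hne hdir hlub
      obtain ⟨a', ⟨c, hc, ha'c⟩, haa'⟩ := ha _ hTne hTdir s hTlub le_rfl
      calc ⨅ c ∈ S, uHull g c ≤ uHull g c := iInf₂_le c hc
        _ ≤ g a' := by
            show (⨅ a ∈ {a | WayBelow a c}, g a) ≤ g a'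
            exact iInf_le_of_le a' (iInf_le _ ha'c)
        _ ≤ g a := hganti haa'
  · -- f ≤ uHull g
    intro f hf b
    refine le_iInf₂ ?_
    intro a (ha : WayBelow a b)
    exact le_trans ((hF f hf).1 ha.le') (le_iSup₂ (f := fun f _ => f a) f hf)
  · -- least upper bound property of uHull g
    intro m hm hmf b
    have hb := hD.2 b
    calc uHull g b ≤ ⨅ a ∈ {a | WayBelow a b}, m a :=
          iInf₂_mono fun a ha => iSup₂_le fun f hf => hmf f hf a
      _ = m b := (hm.2 _ (wayBelow_nonempty hD b) hb.1 b hb.2).symm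
  · -- finite sup is a mon pred
    intro hfin
    refine ⟨fun x y hxy => iSup₂_mono fun f hf => (hF f hf).1 hxy, ?_⟩
    intro S hne hdir s hlub
    show (⨆ f ∈ F, f s) = ⨅ c ∈ S, ⨆ f ∈ F, f c
    have hrw : ∀ f ∈ F, f s = ⨅ c ∈ S, f c := fun f hf => (hF f hf).2 S hne hdir s hlub
    have h1 : (⨆ f ∈ F, f s) = ⨆ f ∈ F, ⨅ c ∈ S, f c :=
      iSup_congr fun f => iSup_congr fun hf => hrw f hf
    rw [h1]
    apply le_antisymm
    · exact iSup₂_le fun f hf => le_iInf₂ fun c hc =>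
        (iInf₂_le c hc).trans (le_iSup₂ (f := fun f _ => f c) f hf)
    · rcases F.eq_empty_or_nonempty with rfl | hFne
      · simp only [Set.mem_empty_iff_false, iSup_false, iSup_bot, le_bot_iff]
        exact le_antisymm (iInf_le_of_le hne.choose (iInf_le _ hne.choose_spec)) bot_le
      · calc ⨅ c ∈ S, ⨆ f ∈ F, f c = ⨅ c : S, ⨆ f : F, (f : D → L) c := by
              rw [← iInf_subtype'' S (fun c => ⨆ f ∈ F, f c)]
              exact iInf_congr fun c => (iSup_subtype'' F (fun f => f (c : D))).symm
          _ = ⨆ k : S → F, ⨅ c : S, ((k c : D → L)) c := iInf_iSup_eq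
          _ ≤ ⨆ f ∈ F, ⨅ c ∈ S, f c := by
              refine iSup_le ?_
              intro k
              obtain ⟨f, hfcof⟩ := exists_cofinal_fiber hne hdir hfin k
              refine le_trans ?_ (le_iSup₂ (f := fun f _ => ⨅ c ∈ S, f c) (f : D → L) f.2)
              refine le_iInf₂ ?_
              intro c hc
              obtain ⟨c', hcc', hkc'⟩ := hfcof ⟨c, hc⟩
              calc ⨅ c : S, ((k c : D → L)) c ≤ ((k c' : D → L)) c' := iInf_le _ c'
                _ = (f : D → L) c' := by rw [hkc']
                _ ≤ (f : D → L) c := (hF f f.2).1 hcc'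
end

section
/- If ℱ ⊆ M D is compact in the relative lower topology of M D, then the pointwise supremum of ℱ is itself an L-fuzzy monotonic predicate, and hence sup ℱ in M D equals the pointwise supremum. -/
open Classical

variable {D D' L : Type*}

/-- The scaled point predicate `d ↦ if d ≤ c then y else ⊥` is a monotonic predicate. -/
lemma etaY_isMonPred [Preorder D] [CompleteLattice L] (c : D) (y : L) :
    IsMonPred (fun d => if d ≤ c then y else (⊥ : L)) := by
  constructor
  · intro a b hab
    by_cases hb : b ≤ c
    · simp [hb, hab.trans hb]
    · simp [hb]
  · intro S hSne hSdir s hs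
    by_cases hsc : s ≤ c
    · have : ∀ d ∈ S, d ≤ c := fun d hd => (hs.1 hd).trans hsc
      simp only [if_pos hsc]
      apply le_antisymm
      · exact le_iInf₂ fun d hd => by simp [this d hd]
      · obtain ⟨d, hd⟩ := hSne
        exact (iInf₂_le d hd).trans (by simp [this d hd])
    · have : ∃ d ∈ S, ¬ d ≤ c := by
        by_contra h
        push_neg at h
        exact hsc (hs.2 fun d hd => h d hd)
      obtain ⟨d, hd, hdc⟩ := this
      simp only [if_neg hsc]
      refine le_antisymm bot_le ?_
      have h1 : (⨅ c' ∈ S, if c' ≤ c then y else (⊥ : L)) ≤ (if d ≤ c then y else ⊥) :=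
        iInf₂_le d hd
      rwa [if_neg hdc] at h1

theorem stmt_7 [PartialOrder D] [CompletelyDistribLattice L]
    (hD : IsFuzzyDomain D) (F : Set {m : D → L // IsMonPred m})
    (hF : @IsCompact _ (Topology.lower {m : D → L // IsMonPred m}) F) :
    IsMonPred (fun b => ⨆ m ∈ F, (m : D → L) b) := by
  letI tM : TopologicalSpace {m : D → L // IsMonPred m} :=
    Topology.lower {m : D → L // IsMonPred m}
  haveI : Topology.IsLower {m : D → L // IsMonPred m} := ⟨rfl⟩
  constructor
  · intro a b hab
    exact iSup₂_mono fun m _ => m.2.1 hab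
  · intro S hSne hSdir s hs
    apply le_antisymm
    · exact le_iInf₂ fun c hc => iSup₂_mono fun m _ => m.2.1 (hs.1 hc)
    · -- the hard direction, using compactness
      have key : ∀ y : L, (∀ c ∈ S, ∃ m ∈ F, y ≤ (m : D → L) c) →
          y ≤ ⨆ m ∈ F, (m : D → L) s := by
        intro y hy
        set t : S → Set {m : D → L // IsMonPred m} := fun c =>
          Set.Ici (⟨fun d => if d ≤ (c : D) then y else ⊥, etaY_isMonPred (c : D) y⟩ :
            {m : D → L // IsMonPred m}) with ht
        have htc : ∀ c, IsClosed (t c) := fun c => isClosed_Ici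
        have hmem : ∀ (c : S) (m : {m : D → L // IsMonPred m}),
            y ≤ (m : D → L) c → m ∈ t c := by
          intro c m hm
          simp only [ht, Set.mem_Ici, Subtype.mk_le_mk]
          intro d
          dsimp only
          split_ifs with h
          · exact hm.trans (m.2.1 h)
          · exact bot_le
        haveI : Nonempty S := hSne.to_subtype
        have hdir : Directed (· ≤ ·) (Subtype.val : S → D) :=
          directedOn_iff_directed.mp hSdir
        have hst : ∀ u : Finset S, (F ∩ ⋂ c ∈ u, t c).Nonempty := by
          intro u
          obtain ⟨z, hz⟩ := hdir.finset_le u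
          obtain ⟨m, hmF, hm⟩ := hy z z.2
          refine ⟨m, hmF, ?_⟩
          simp only [Set.mem_iInter]
          intro c hc
          exact hmem c m (hm.trans (m.2.1 (hz c hc)))
        obtain ⟨m, hmF, hm⟩ := hF.inter_iInter_nonempty t htc hst
        simp only [Set.mem_iInter] at hm
        have hyc : ∀ c ∈ S, y ≤ (m : D → L) c := by
          intro c hc
          have h2 := Pi.le_def.mp (hm ⟨c, hc⟩) c
          simpa using h2
        have h3 : y ≤ (m : D → L) s := by
          rw [m.2.2 S hSne hSdir s hs]
          exact le_iInf₂ hyc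
        exact h3.trans (le_iSup₂ (f := fun (m : {m : D → L // IsMonPred m}) (_ : m ∈ F) => (m : D → L) s) m hmF)
      -- complete distributivity
      haveI : Nonempty S := hSne.to_subtype
      have hrw : (⨅ c ∈ S, ⨆ m ∈ F, (m : D → L) c)
          = ⨅ c : S, ⨆ m : F, ((m : {m : D → L // IsMonPred m}) : D → L) c := by
        rw [iInf_subtype']
        exact iInf_congr fun c => by rw [iSup_subtype']
      show (⨅ c ∈ S, ⨆ m ∈ F, (m : D → L) c) ≤ ⨆ m ∈ F, (m : D → L) s
      rw [hrw, iInf_iSup_eq]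
      refine iSup_le fun g => key _ fun c hc => ?_
      exact ⟨g ⟨c, hc⟩, (g ⟨c, hc⟩).2, iInf_le (fun i : S => ((g i : {m : D → L // IsMonPred m}) : D → L) i) ⟨c, hc⟩⟩
end

section
/- Let L be a completely distributive lattice with an associative operation * that distributes over arbitrary suprema in both variables and has 1 as two-sided unit. For α ∈ L, a monotonic predicate m on D, and an antitone function f : D → L: m(b) ≥ α * f(b) for all b ∈ D if and only if m(b) ≥ α * f^u(b) for all b ∈ D; and symmetrically with f(b) * α and f^u(b) * α. -/
open Classical

variable {D D' L : Type*}

/-- `α ⊙̄ m = (α * m)^u`. -/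
noncomputable def smulMP [Preorder D] [CompleteLattice L] (mul : L → L → L)
    (α : L) (m : D → L) : D → L :=
  uHull (fun d => mul α (m d))

/-- Strongest postcondition transformer:
`sp(φ)(m)(b) = ⨅_{b' ≪ b} ⨆_{a} m a * φ a b'`. -/
noncomputable def sp [Preorder D] [Preorder D'] [CompleteLattice L]
    (mul : L → L → L) (φ : D → D' → L) (m : D → L) : D' → L :=
  fun b => ⨅ b' ∈ {b' | WayBelow b' b}, ⨆ a : D, mul (m a) (φ a b')

/-- Scott continuity of `φ : D → M D'`: `φ` sends a directed supremum in `D`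
to the supremum of the image in the poset of monotonic predicates on `D'`. -/
def ScottContTo [Preorder D] [Preorder D'] [CompleteLattice L] (φ : D → D' → L) : Prop :=
  ∀ S : Set D, S.Nonempty → DirectedOn (· ≤ ·) S → ∀ s : D, IsLUB S s →
    (∀ d ∈ S, φ d ≤ φ s) ∧ ∀ m : D' → L, IsMonPred m → (∀ d ∈ S, φ d ≤ m) → φ s ≤ m

lemma wb_nonempty [PartialOrder D] (hD : IsFuzzyDomain D) (b : D) :
    {a | WayBelow a b}.Nonempty := by
  by_contra h
  rw [Set.not_nonempty_iff_eq_empty] at h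
  have hlub := (hD.2 b).2
  rw [h] at hlub
  have hleast : ∀ x : D, b ≤ x := fun x => hlub.2 (fun y hy => hy.elim)
  have hbb : WayBelow b b := by
    intro S hS hdir s hs hbs
    obtain ⟨c, hc⟩ := hS
    exact ⟨c, hc, hleast c⟩
  have : b ∈ ({a | WayBelow a b} : Set D) := hbb
  rw [h] at this
  exact this

lemma wb_le [PartialOrder D] {a b : D} (h : WayBelow a b) : a ≤ b := by
  obtain ⟨c, hc, hac⟩ := h {b} ⟨b, rfl⟩
    (fun x hx y hy => ⟨b, rfl, hx.le, hy.le⟩) b isLUB_singleton le_rfl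
  rw [Set.mem_singleton_iff] at hc
  exact hc ▸ hac

theorem stmt_8 [PartialOrder D] [CompletelyDistribLattice L]
    (hD : IsFuzzyDomain D) (mul : L → L → L)
    (hassoc : ∀ a b c : L, mul (mul a b) c = mul a (mul b c))
    (hone : ∀ a : L, mul ⊤ a = a ∧ mul a ⊤ = a)
    (hsup₁ : ∀ (a : L) (S : Set L), mul a (sSup S) = ⨆ b ∈ S, mul a b)
    (hsup₂ : ∀ (a : L) (S : Set L), mul (sSup S) a = ⨆ b ∈ S, mul b a)
    (α : L) (m : D → L) (hm : IsMonPred m) (f : D → L) (hf : Antitone f) :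
    ((∀ b : D, mul α (f b) ≤ m b) ↔ (∀ b : D, mul α (uHull f b) ≤ m b)) ∧
    ((∀ b : D, mul (f b) α ≤ m b) ↔ (∀ b : D, mul (uHull f b) α ≤ m b)) := by
  have mono1 : ∀ x y : L, x ≤ y → mul α x ≤ mul α y := by
    intro x y hxy
    have := hsup₁ α {x, y}
    rw [sSup_pair, sup_eq_right.2 hxy] at this
    rw [this, iSup_insert, iSup_singleton]
    exact le_sup_left
  have mono2 : ∀ x y : L, x ≤ y → mul x α ≤ mul y α := by
    intro x y hxy
    have := hsup₂ α {x, y}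
    rw [sSup_pair, sup_eq_right.2 hxy] at this
    rw [this, iSup_insert, iSup_singleton]
    exact le_sup_left
  have hub : ∀ b : D, f b ≤ uHull f b := by
    intro b
    refine le_iInf₂ fun a ha => hf (wb_le ha)
  have hmb : ∀ b : D, m b = ⨅ a ∈ {a | WayBelow a b}, m a := fun b =>
    hm.2 _ (wb_nonempty hD b) (hD.2 b).1 b (hD.2 b).2
  constructor
  · constructor
    · intro h b
      rw [hmb b]
      refine le_iInf₂ fun a ha => ?_
      exact (mono1 _ _ (biInf_le f ha)).trans (h a)
    · intro h b
      exact (mono1 _ _ (hub b)).trans (h b)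
  · constructor
    · intro h b
      rw [hmb b]
      refine le_iInf₂ fun a ha => ?_
      exact (mono2 _ _ (biInf_le f ha)).trans (h a)
    · intro h b
      exact (mono2 _ _ (hub b)).trans (h b)
end

section
/- For any map φ : D → M D', the strongest postcondition transformer sp(φ), defined by sp(φ)(m)(b) = inf { sup { m(a) * φ(a)(b') ∣ a ∈ D } ∣ b' ∈ D', b' ≪ b }, preserves binary joins: sp(φ)(m₁ ⊕̄ m₂) = sp(φ)(m₁) ⊕̄ sp(φ)(m₂). -/
open Classical

variable {D D' L : Type*}

lemma biInf_sup_of_directed {D' L : Type*} [CompletelyDistribLattice L] [Preorder D']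
    {S : Set D'} (hdir : DirectedOn (· ≤ ·) S)
    {A B : D' → L}
    (hA : ∀ i ∈ S, ∀ j ∈ S, i ≤ j → A j ≤ A i)
    (hB : ∀ i ∈ S, ∀ j ∈ S, i ≤ j → B j ≤ B i) :
    ⨅ i ∈ S, (A i ⊔ B i) = (⨅ i ∈ S, A i) ⊔ (⨅ i ∈ S, B i) := by
  apply le_antisymm
  · have heq : (⨅ i ∈ S, A i) ⊔ (⨅ i ∈ S, B i)
        = ⨅ i : S, ⨅ j : S, (A i ⊔ B j) := by
      rw [iInf_subtype', iInf_subtype', iInf_sup_eq]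
      exact iInf_congr fun i => sup_iInf_eq _ _
    rw [heq]
    refine le_iInf fun i => le_iInf fun j => ?_
    obtain ⟨k, hkS, hik, hjk⟩ := hdir i.1 i.2 j.1 j.2
    refine le_trans (iInf₂_le k hkS) ?_
    exact sup_le_sup (hA i.1 i.2 k hkS hik) (hB j.1 j.2 k hkS hjk)
  · exact sup_le (le_iInf₂ fun i hi => le_trans (iInf₂_le i hi) le_sup_left)
      (le_iInf₂ fun i hi => le_trans (iInf₂_le i hi) le_sup_right)

lemma mul_mono_right' {L : Type*} [CompleteLattice L] (mul : L → L → L)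
    (hsup₁ : ∀ (a : L) (S : Set L), mul a (sSup S) = ⨆ b ∈ S, mul a b)
    (c : L) {x y : L} (hxy : x ≤ y) : mul c x ≤ mul c y := by
  have h := hsup₁ c {x, y}
  rw [sSup_pair, sup_eq_right.mpr hxy] at h
  rw [h]
  exact le_iSup₂ (f := fun b (_ : b ∈ ({x, y} : Set L)) => mul c b) x (by simp)

theorem stmt_15 [PartialOrder D] [PartialOrder D'] [CompletelyDistribLattice L]
    (hD : IsFuzzyDomain D) (hD' : IsFuzzyDomain D') (mul : L → L → L)
    (hassoc : ∀ a b c : L, mul (mul a b) c = mul a (mul b c))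
    (hone : ∀ a : L, mul ⊤ a = a ∧ mul a ⊤ = a)
    (hsup₁ : ∀ (a : L) (S : Set L), mul a (sSup S) = ⨆ b ∈ S, mul a b)
    (hsup₂ : ∀ (a : L) (S : Set L), mul (sSup S) a = ⨆ b ∈ S, mul b a)
    (φ : D → D' → L) (hφ : ∀ a : D, IsMonPred (φ a))
    (m₁ m₂ : D → L) (hm₁ : IsMonPred m₁) (hm₂ : IsMonPred m₂) :
    sp mul φ (fun d => m₁ d ⊔ m₂ d) =
      (fun b => sp mul φ m₁ b ⊔ sp mul φ m₂ b) := by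
  funext b
  have hdir : DirectedOn (· ≤ ·) {b' | WayBelow b' b} := (hD'.2 b).1
  have hstep : ∀ b' : D', (⨆ a : D, mul (m₁ a ⊔ m₂ a) (φ a b'))
      = (⨆ a : D, mul (m₁ a) (φ a b')) ⊔ (⨆ a : D, mul (m₂ a) (φ a b')) := by
    intro b'
    rw [← iSup_sup_eq]
    refine iSup_congr fun a => ?_
    have h := hsup₂ (φ a b') {m₁ a, m₂ a}
    rw [sSup_pair] at h
    rw [h, iSup_pair]
  simp only [sp, hstep]
  refine biInf_sup_of_directed hdir ?_ ?_ <;>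
    exact fun i _ j _ hij =>
      iSup_mono fun a => mul_mono_right' mul hsup₁ _ ((hφ a).1 hij)
end

section
/- If β ∈ L is way-way below α (i.e., for every subset Γ ⊆ L with sup Γ ≥ α there exists γ ∈ Γ with γ ≥ β), m is a monotonic predicate with m(a) ≥ β for all a way below a₀, and m sends directed suprema to infima, then m(a₀) ≥ β. -/
open Classical

variable {D D' L : Type*}

theorem stmt_19 [PartialOrder D] [CompleteLattice L]
    (hD : IsFuzzyDomain D) (α β : L)
    (hwwb : ∀ Γ : Set L, α ≤ sSup Γ → ∃ γ ∈ Γ, β ≤ γ)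
    (m : D → L) (hm : IsMonPred m) (a₀ : D)
    (h : ∀ a : D, WayBelow a a₀ → β ≤ m a) :
    β ≤ m a₀ := by
  obtain ⟨hdir, hlub⟩ := hD.2 a₀
  have hne : {a | WayBelow a a₀}.Nonempty := by
    by_contra hne
    rw [Set.not_nonempty_iff_eq_empty] at hne
    rw [hne] at hlub
    -- a₀ is the least element
    have hleast : ∀ d : D, a₀ ≤ d := fun d => hlub.2 (by simp [lowerBounds])
    have : WayBelow a₀ a₀ := by
      intro S hS hSd s hs hle
      obtain ⟨c, hc⟩ := hS
      exact ⟨c, hc, hleast c⟩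
    have : a₀ ∈ ({} : Set D) := hne ▸ this
    exact this.elim
  rw [hm.2 _ hne hdir a₀ hlub]
  exact le_iInf fun a => le_iInf fun ha => h a ha
end
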